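/- Let G' be a finite simple graph on an n-element vertex set, let u ∈ V(G'), and let the neighborhood of u in G' be partitioned as N(u) = A ⊔ A'. Let G be the simple graph on vertex set (V(G')∖{u}) ∪ {v, w, v'} (three new vertices) whose edges are the edges of the induced subgraph of G' on V(G')∖{u}, together with {v,a} for each a ∈ A, {v',a'} for each a' ∈ A', and {v,w}, {w,v'}. Then contracting qubits w and v' of |G⟩ against |+⟩ yields, after identifying the vertex v of G with the vertex u of G', exactly (1/2)·|G'⟩; that is, ⟨+|_{v'} ⟨+|_w |G⟩ = (1/2)·|G'⟩. In particular, the graph state |G'⟩ is obtained (up to normalization) from |G⟩ by projecting the two inserted qubits w and v' onto |+⟩. -/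

import Mathlib

/-!
Contracting two adjacent qubits `x`, `y` of a graph state against `|+⟩` adds up the four
amplitudes of `S`, `S ∪ {x}`, `S ∪ {y}`, `S ∪ {x, y}`. If `a` and `b` count the neighbours of
`x` and `y` in `S`, their signs are `(-1)^{e(S)}` times `1`, `(-1)^a`, `(-1)^b`, `-(-1)^{a+b}`,
which sum to `2 (-1)^{e(S) + ab}`. For `x = w`, `y = v'` we get `a = [v ∈ S]` and `b = |S ∩ A'|`,
so the term `ab` supplies exactly the edges from `v` to `A'` that `G` lacks compared with `G'`.
-/

/-- The number of edges of `H` with both endpoints in `S`. -/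
noncomputable def edgesIn {W : Type} (H : SimpleGraph W) (S : Finset W) : ℕ :=
  Set.ncard {e : Sym2 W | e ∈ H.edgeSet ∧ ∀ x ∈ e, x ∈ S}

/-- The graph state `|H⟩ = 2^{-m/2} ∑_{S ⊆ W} (-1)^{e(S)} |S⟩`, given by its coordinates in
the computational basis indexed by the subsets `S` of the vertex set. -/
noncomputable def graphState {W : Type} [Fintype W] (H : SimpleGraph W) : Finset W → ℂ :=
  fun S => (-1 : ℂ) ^ edgesIn H S / ((Real.sqrt 2 : ℝ) : ℂ) ^ Fintype.card W

/-- Contraction of the qubit `w` against `|+⟩ = (|0⟩ + |1⟩)/√2`: the linear map sending each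
basis state `|S⟩` to `2^{-1/2} |S \ {w}⟩`, expressed on coordinates. -/
noncomputable def contractPlus {W : Type} [DecidableEq W] (w : W)
    (ψ : Finset W → ℂ) : Finset {x : W // x ≠ w} → ℂ :=
  fun S =>
    (ψ (S.map (Function.Embedding.subtype fun x => x ≠ w)) +
     ψ (insert w (S.map (Function.Embedding.subtype fun x => x ≠ w)))) /
      ((Real.sqrt 2 : ℝ) : ℂ)

/-- Contraction of the qubit `w` against `|−⟩ = (|0⟩ − |1⟩)/√2`: the linear map sending each
basis state `|S⟩` to `2^{-1/2} (−1)^{[w ∈ S]} |S \ {w}⟩`, expressed on coordinates. -/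
noncomputable def contractMinus {W : Type} [DecidableEq W] (w : W)
    (ψ : Finset W → ℂ) : Finset {x : W // x ≠ w} → ℂ :=
  fun S =>
    (ψ (S.map (Function.Embedding.subtype fun x => x ≠ w)) -
     ψ (insert w (S.map (Function.Embedding.subtype fun x => x ≠ w)))) /
      ((Real.sqrt 2 : ℝ) : ℂ)

/-- The diagonal operator `Z[B]`, sending `|S⟩` to `(-1)^{|B ∩ S|} |S⟩`. -/
noncomputable def Zop {U : Type} [DecidableEq U] (B : Finset U) (φ : Finset U → ℂ) :
    Finset U → ℂ :=
  fun S => (-1 : ℂ) ^ (B ∩ S).card * φ S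

/-- The vertex set `(V(G') \ {u}) ∪ {v, w, v'}`: the three new vertices `v`, `w`, `v'` are
`Sum.inr 0`, `Sum.inr 1`, `Sum.inr 2` respectively. -/
abbrev BigVert (V' : Type) (u : V') : Type := {x : V' // x ≠ u} ⊕ Fin 3

/-- The relation generating the graph `G`: the edges of the induced subgraph of `G'` on
`V(G') \ {u}`, together with `{v, a}` for `a ∈ A`, `{v', a'}` for `a' ∈ A'`, and the path
edges `{v, w}`, `{w, v'}`. -/
def bigRel {V' : Type} (G' : SimpleGraph V') (u : V') (A A' : Finset V') :
    BigVert V' u → BigVert V' u → Prop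
  | Sum.inl a, Sum.inl b => G'.Adj a.val b.val
  | Sum.inl a, Sum.inr i => (i = 0 ∧ a.val ∈ A) ∨ (i = 2 ∧ a.val ∈ A')
  | Sum.inr i, Sum.inr j => (i = 0 ∧ j = 1) ∨ (i = 1 ∧ j = 2)
  | Sum.inr _, Sum.inl _ => False

/-- The graph `G` obtained from `G'` by replacing the vertex `u` by the path `v - w - v'`,
with `v` adjacent to the neighbors of `u` in `A` and `v'` to those in `A'`. -/
def bigG {V' : Type} (G' : SimpleGraph V') (u : V') (A A' : Finset V') :
    SimpleGraph (BigVert V' u) := SimpleGraph.fromRel (bigRel G' u A A')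

/-- The inserted middle vertex `w`. -/
abbrev wVert (V' : Type) (u : V') : BigVert V' u := Sum.inr 1

/-- The vertex set after contracting the qubit `w`. -/
abbrev RemVert (V' : Type) (u : V') : Type := {x : BigVert V' u // x ≠ wVert V' u}

/-- The inserted vertex `v`, as a vertex of the remaining qubits. -/
def vVert (V' : Type) (u : V') : RemVert V' u :=
  ⟨Sum.inr 0, fun h => absurd (Sum.inr.inj h) (by decide)⟩

/-- The inserted vertex `v'`, as a vertex of the remaining qubits. -/
def v'Vert (V' : Type) (u : V') : RemVert V' u :=
  ⟨Sum.inr 2, fun h => absurd (Sum.inr.inj h) (by decide)⟩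

/-- The restriction of a subset `T` of the remaining qubits to the qubits `V(G') \ {u}`. -/
def restrictT {V' : Type} [Fintype V'] [DecidableEq V'] (u : V')
    (T : Finset (RemVert V' u)) : Finset {x : V' // x ≠ u} :=
  Finset.univ.filter (fun a : {x : V' // x ≠ u} =>
    (⟨Sum.inl a, Sum.inl_ne_inr⟩ : RemVert V' u) ∈ T)

/-- `extendVV u bv bv' φ` is the state `|bv⟩_v |bv'⟩_{v'} ⊗ φ` on the qubits
`(V(G') \ {u}) ∪ {v, v'}`, expressed on coordinates. -/
noncomputable def extendVV {V' : Type} [Fintype V'] [DecidableEq V'] (u : V')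
    (bv bv' : Bool) (φ : Finset {x : V' // x ≠ u} → ℂ) : Finset (RemVert V' u) → ℂ :=
  fun T =>
    if ((vVert V' u ∈ T) ↔ bv = true) ∧ ((v'Vert V' u ∈ T) ↔ bv' = true) then
      φ (restrictT u T)
    else 0

/-- The vertex set after contracting the qubits `w` and `v'`: it consists of the vertices
of `V(G') \ {u}` together with the vertex `v`. -/
abbrev FinalVert (V' : Type) (u : V') : Type := {y : RemVert V' u // y ≠ v'Vert V' u}

/-- The canonical identification of `V(G')` with the qubits remaining after contracting
`w` and `v'`: the vertex `u` of `G'` is identified with the inserted vertex `v` of `G`,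
and every other vertex with itself. -/
def identMap {V' : Type} [DecidableEq V'] (u : V') (x : V') : FinalVert V' u :=
  if h : x = u then
    ⟨vVert V' u, fun hc => absurd (Sum.inr.inj (congrArg Subtype.val hc)) (by decide)⟩
  else
    ⟨⟨Sum.inl ⟨x, h⟩, Sum.inl_ne_inr⟩, fun hc => Sum.inl_ne_inr (congrArg Subtype.val hc)⟩

open Finset

lemma edgesIn_insert {W : Type} [DecidableEq W] (H : SimpleGraph W) [DecidableRel H.Adj]
    {x : W} {S : Finset W} (hx : x ∉ S) :
    edgesIn H (insert x S) = edgesIn H S + #(S.filter (H.Adj x)) := by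
  have hfin : {e : Sym2 W | e ∈ H.edgeSet ∧ ∀ z ∈ e, z ∈ S}.Finite :=
    S.sym2.finite_toSet.subset fun e he => mem_sym2_iff.mpr he.2
  have hdisj : Disjoint {e : Sym2 W | e ∈ H.edgeSet ∧ ∀ z ∈ e, z ∈ S}
      ((fun y => s(x, y)) '' (S.filter (H.Adj x) : Set W)) := by
    rw [Set.disjoint_left]
    rintro e ⟨-, he⟩ ⟨y, -, rfl⟩
    exact hx (he x (Sym2.mem_mk_left x y))
  unfold edgesIn
  rw [← Set.ncard_coe_finset,
    ← Set.ncard_image_of_injective (f := fun y => s(x, y)) _ fun _ _ => Sym2.congr_right.mp,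
    ← Set.ncard_union_eq hdisj hfin]
  congr 1
  ext e
  induction e using Sym2.ind with
  | _ a b =>
    simp only [Set.mem_union, Set.mem_ofPred_eq, Set.mem_image, SimpleGraph.mem_edgeSet,
      Sym2.mem_iff, forall_eq_or_imp, forall_eq, mem_insert, coe_filter,
      Sym2.eq_iff]
    constructor
    · rintro ⟨hab, rfl | ha, rfl | hb⟩
      · exact absurd hab H.irrefl
      · exact Or.inr ⟨b, ⟨hb, hab⟩, Or.inl ⟨rfl, rfl⟩⟩
      · exact Or.inr ⟨a, ⟨ha, hab.symm⟩, Or.inr ⟨rfl, rfl⟩⟩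
      · exact Or.inl ⟨hab, ha, hb⟩
    · rintro (⟨hab, ha, hb⟩ | ⟨y, ⟨hy, hxy⟩, ⟨rfl, rfl⟩ | ⟨rfl, rfl⟩⟩)
      · exact ⟨hab, Or.inr ha, Or.inr hb⟩
      · exact ⟨hxy, Or.inl rfl, Or.inr hy⟩
      · exact ⟨hxy.symm, Or.inr hy, Or.inl rfl⟩

lemma edgesIn_congr {W : Type} {H H' : SimpleGraph W} {S : Finset W}
    (h : ∀ a ∈ S, ∀ b ∈ S, H.Adj a b ↔ H'.Adj a b) : edgesIn H S = edgesIn H' S := by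
  unfold edgesIn
  congr 1
  ext e
  induction e using Sym2.ind with
  | _ a b =>
    simp only [Set.mem_ofPred_eq, SimpleGraph.mem_edgeSet, Sym2.mem_iff, forall_eq_or_imp,
      forall_eq]
    exact and_congr_left fun ⟨ha, hb⟩ => h a ha b hb

lemma edgesIn_comap {W W' : Type} (f : W ↪ W') (H : SimpleGraph W') (S : Finset W) :
    edgesIn (H.comap f) S = edgesIn H (S.map f) := by
  unfold edgesIn
  rw [← Set.ncard_preimage_of_injective_subset_range (Sym2.map.injective f.injective)]
  · congr 1
    ext e
    induction e using Sym2.ind with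
    | _ a b => simp [Sym2.map_mk]
  · rintro e ⟨-, he⟩
    induction e using Sym2.ind with
    | _ a b =>
      obtain ⟨a', -, rfl⟩ := mem_map.mp (he a (Sym2.mem_mk_left a b))
      obtain ⟨b', -, rfl⟩ := mem_map.mp (he b (Sym2.mem_mk_right _ b))
      exact ⟨s(a', b'), rfl⟩

lemma one_add_neg_one_pow_add_neg_one_pow_sub {R : Type} [CommRing R] (a b : ℕ) :
    1 + (-1 : R) ^ a + (-1) ^ b - (-1) ^ (a + b) = 2 * (-1) ^ (a * b) := by
  rw [pow_add, pow_mul]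
  rcases Nat.even_or_odd a with ha | ha <;> rcases Nat.even_or_odd b with hb | hb <;>
    simp only [ha.neg_one_pow, hb.neg_one_pow, one_pow] <;> ring

lemma neg_one_pow_edgesIn_insert_sum {W R : Type} [DecidableEq W] [CommRing R]
    (H : SimpleGraph W) [DecidableRel H.Adj] {x y : W} (hxy : H.Adj x y) {S : Finset W}
    (hx : x ∉ S) (hy : y ∉ S) :
    (-1 : R) ^ edgesIn H S + (-1) ^ edgesIn H (insert x S) +
        ((-1) ^ edgesIn H (insert y S) + (-1) ^ edgesIn H (insert x (insert y S))) =
      2 * (-1) ^ (edgesIn H S + #(S.filter (H.Adj x)) * #(S.filter (H.Adj y))) := by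
  have hx' : x ∉ insert y S := by simp [hxy.ne, hx]
  rw [edgesIn_insert H hx, edgesIn_insert H hy, edgesIn_insert H hx', edgesIn_insert H hy,
    filter_insert, if_pos hxy, card_insert_of_notMem (by simp [hy])]
  linear_combination (-1 : R) ^ edgesIn H S *
    one_add_neg_one_pow_add_neg_one_pow_sub (R := R) #(S.filter (H.Adj x)) #(S.filter (H.Adj y))

lemma ofReal_sqrt_two_sq : ((Real.sqrt 2 : ℝ) : ℂ) ^ 2 = 2 := by
  rw [← Complex.ofReal_pow, Real.sq_sqrt zero_le_two, Complex.ofReal_ofNat]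

lemma contractPlus_contractPlus_apply {W : Type} [DecidableEq W] {x : W} {y : {z // z ≠ x}}
    (ψ : Finset W → ℂ) {T : Finset {z // z ≠ y}} {S : Finset W}
    (hS : (T.map (.subtype _)).map (.subtype _) = S) :
    contractPlus y (contractPlus x ψ) T =
      (ψ S + ψ (insert x S) + (ψ (insert ↑y S) + ψ (insert x (insert ↑y S)))) / 2 := by
  simp only [contractPlus, map_insert, Function.Embedding.coe_subtype, hS]
  rw [← add_div, div_div, ← sq, ofReal_sqrt_two_sq]

lemma contractPlus_contractPlus_graphState {W : Type} [Fintype W] [DecidableEq W]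
    (H : SimpleGraph W) [DecidableRel H.Adj] {x : W} {y : {z // z ≠ x}} (hxy : H.Adj x y)
    {T : Finset {z // z ≠ y}} {S : Finset W} (hS : (T.map (.subtype _)).map (.subtype _) = S) :
    contractPlus y (contractPlus x (graphState H)) T =
      (-1) ^ (edgesIn H S + #(S.filter (H.Adj x)) * #(S.filter (H.Adj y))) /
        ((Real.sqrt 2 : ℝ) : ℂ) ^ Fintype.card W := by
  have hx : x ∉ S := hS ▸ by simp
  have hy : ↑y ∉ S := hS ▸ by simp
  simp only [contractPlus_contractPlus_apply _ hS, graphState, ← add_div,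
    neg_one_pow_edgesIn_insert_sum H hxy hx hy]
  ring

def liftVert {V' : Type} [DecidableEq V'] (u : V') : V' ↪ BigVert V' u where
  toFun x := if h : x = u then Sum.inr 0 else Sum.inl ⟨x, h⟩
  inj' a b hab := by
    by_cases ha : a = u <;> by_cases hb : b = u <;> simp_all

lemma bigG_adj_wVert_v'Vert {V' : Type} (G' : SimpleGraph V') (u : V') (A A' : Finset V') :
    (bigG G' u A A').Adj (wVert V' u) (v'Vert V' u) := by
  simp [bigG, bigRel, v'Vert]

section gadget

variable {V' : Type} [DecidableEq V'] (G' : SimpleGraph V') (u : V') (A A' : Finset V')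

lemma liftVert_self : liftVert u u = Sum.inr 0 := dif_pos rfl

lemma liftVert_of_ne {x : V'} (hx : x ≠ u) : liftVert u x = Sum.inl ⟨x, hx⟩ := dif_neg hx

lemma identMap_val_val (x : V') :
    ((identMap u x : FinalVert V' u) : RemVert V' u).1 = liftVert u x := by
  by_cases h : x = u <;> simp [identMap, liftVert, vVert, h]

lemma identMap_surjective : Function.Surjective (identMap u) := by
  rintro ⟨⟨a | i, hw⟩, hv'⟩
  · exact ⟨a, Subtype.ext (Subtype.ext (by rw [identMap_val_val, liftVert_of_ne u a.2]))⟩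
  · fin_cases i
    · exact ⟨u, Subtype.ext (Subtype.ext (by rw [identMap_val_val, liftVert_self]; rfl))⟩
    · exact absurd rfl hw
    · exact absurd rfl hv'

lemma map_subtype_map_subtype_eq_map_liftVert [Fintype V'] (T : Finset (FinalVert V' u)) :
    (T.map (.subtype _)).map (.subtype _) =
      (univ.filter fun x => identMap u x ∈ T).map (liftVert u) := by
  ext z
  simp only [mem_map, mem_filter, mem_univ, true_and, Function.Embedding.coe_subtype]
  constructor
  · rintro ⟨_, ⟨t, ht, rfl⟩, rfl⟩
    obtain ⟨x, rfl⟩ := identMap_surjective u t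
    exact ⟨x, ht, (identMap_val_val u x).symm⟩
  · rintro ⟨x, hx, rfl⟩
    exact ⟨_, ⟨_, hx, rfl⟩, identMap_val_val u x⟩

lemma card_bigVert [Fintype V'] : Fintype.card (BigVert V' u) = Fintype.card V' + 2 := by
  have hpos : 0 < Fintype.card V' := Fintype.card_pos_iff.mpr ⟨u⟩
  rw [Fintype.card_sum, Fintype.card_fin, Fintype.card_subtype_compl, Fintype.card_subtype_eq]
  omega

lemma bigG_comap_liftVert_adj_of_ne {a b : V'} (ha : a ≠ u) (hb : b ≠ u) :
    ((bigG G' u A A').comap (liftVert u)).Adj a b ↔ G'.Adj a b := by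
  simp only [bigG, SimpleGraph.comap_adj, SimpleGraph.fromRel_adj, liftVert_of_ne u ha,
    liftVert_of_ne u hb, bigRel, G'.adj_comm b a, or_self]
  exact ⟨And.right, fun h => ⟨fun he => h.ne (congrArg Subtype.val (Sum.inl_injective he)), h⟩⟩

lemma bigG_comap_liftVert_adj_self_left {b : V'} (hb : b ≠ u) :
    ((bigG G' u A A').comap (liftVert u)).Adj u b ↔ b ∈ A := by
  simp [bigG, bigRel, liftVert_self, liftVert_of_ne u hb]

lemma bigG_adj_wVert_liftVert (b : V') :
    (bigG G' u A A').Adj (wVert V' u) (liftVert u b) ↔ b = u := by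
  rcases eq_or_ne b u with rfl | hb
  · simp [bigG, bigRel, liftVert_self]
  · simp [bigG, bigRel, liftVert_of_ne u hb, hb]

lemma bigG_adj_v'Vert_liftVert (b : V') :
    (bigG G' u A A').Adj (v'Vert V' u) (liftVert u b) ↔ b ≠ u ∧ b ∈ A' := by
  rcases eq_or_ne b u with rfl | hb
  · simp [bigG, bigRel, v'Vert, liftVert_self]
  · simp [bigG, bigRel, v'Vert, liftVert_of_ne u hb, hb]

lemma card_filter_bigG_adj_wVert [DecidableRel (bigG G' u A A').Adj] (S : Finset V') :
    #((S.map (liftVert u)).filter ((bigG G' u A A').Adj (wVert V' u))) =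
      if u ∈ S then 1 else 0 := by
  simp only [filter_map, card_map, Function.comp_def, bigG_adj_wVert_liftVert, filter_eq',
    apply_ite card, card_singleton, card_empty]

lemma card_filter_bigG_adj_v'Vert [DecidableRel (bigG G' u A A').Adj] (huA' : u ∉ A')
    (S : Finset V') :
    #((S.map (liftVert u)).filter ((bigG G' u A A').Adj (v'Vert V' u))) =
      #(S.filter (· ∈ A')) := by
  simp only [filter_map, card_map, Function.comp_def, bigG_adj_v'Vert_liftVert]
  congr 1
  exact filter_congr fun b _ => and_iff_right_of_imp fun hb hbu => huA' (hbu ▸ hb)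

/-- Pulled back along `liftVert`, which sends `u` to `v`, the graph `G` is `G'` without the
edges from `u` to `A'`; these are restored by the correction term. -/
lemma edgesIn_comap_liftVert_add (hN : (↑A ∪ ↑A' : Set V') = G'.neighborSet u)
    (hdisj : Disjoint A A') (S : Finset V') :
    edgesIn ((bigG G' u A A').comap (liftVert u)) S +
        (if u ∈ S then 1 else 0) * #(S.filter (· ∈ A')) =
      edgesIn G' S := by
  classical
  have hadj_u (b : V') : G'.Adj u b ↔ b ∈ A ∨ b ∈ A' := by
    simpa using (Set.ext_iff.mp hN b).symm
  have hagree {X : Finset V'} (hX : u ∉ X) :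
      edgesIn ((bigG G' u A A').comap (liftVert u)) X = edgesIn G' X :=
    edgesIn_congr fun a ha b hb =>
      bigG_comap_liftVert_adj_of_ne G' u A A' (ne_of_mem_of_not_mem ha hX)
        (ne_of_mem_of_not_mem hb hX)
  by_cases hu : u ∈ S
  · obtain ⟨X, hX, rfl⟩ : ∃ X, u ∉ X ∧ S = insert u X :=
      ⟨S.erase u, notMem_erase u S, (insert_erase hu).symm⟩
    have huA' : u ∉ A' := fun h => G'.irrefl ((hadj_u u).mpr (Or.inr h))
    rw [if_pos (mem_insert_self u X), one_mul, filter_insert, if_neg huA', edgesIn_insert _ hX,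
      edgesIn_insert _ hX, hagree hX, add_assoc,
      filter_congr fun b hb =>
        bigG_comap_liftVert_adj_self_left G' u A A' (ne_of_mem_of_not_mem hb hX),
      filter_congr fun b _ => hadj_u b, filter_or, card_union_of_disjoint]
    exact disjoint_filter.mpr fun a _ ha ha' => disjoint_left.mp hdisj ha ha'
  · rw [if_neg hu, zero_mul, add_zero, hagree hu]

end gadget

/-- Let the neighborhood of `u` in `G'` be partitioned as `A ⊔ A'` and
let `G` be the graph obtained by replacing `u` by the path `v - w - v'` as above.  Then
contracting the qubits `w` and `v'` of `|G⟩` against `|+⟩` yields, after identifying the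
vertex `v` of `G` with the vertex `u` of `G'`, exactly `(1/2)·|G'⟩`:
`⟨+|_{v'} ⟨+|_w |G⟩ = (1/2)·|G'⟩`. -/
theorem contractPlus_v'_contractPlus_w_graphState
    {V' : Type} [Fintype V'] [DecidableEq V'] (G' : SimpleGraph V') (u : V')
    (A A' : Finset V') (hN : (↑A ∪ ↑A' : Set V') = G'.neighborSet u)
    (hdisj : Disjoint A A') :
    contractPlus (v'Vert V' u) (contractPlus (wVert V' u) (graphState (bigG G' u A A'))) =
      fun T : Finset (FinalVert V' u) =>
        graphState G' (Finset.univ.filter fun x : V' => identMap u x ∈ T) / 2 := by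
  classical
  funext T
  have huA' : u ∉ A' := fun h => G'.notMem_neighborSet_self (hN.subset (Set.mem_union_right _ h))
  rw [contractPlus_contractPlus_graphState _ (bigG_adj_wVert_v'Vert G' u A A')
      (map_subtype_map_subtype_eq_map_liftVert u T),
    ← edgesIn_comap, card_filter_bigG_adj_wVert, card_filter_bigG_adj_v'Vert G' u A A' huA',
    edgesIn_comap_liftVert_add G' u A A' hN hdisj, graphState, card_bigVert, pow_add,
    ofReal_sqrt_two_sq, div_div]
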